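/- arXiv:1806.07162 — 3 statements merged into one kernel-verified Lean document; each statement's English description precedes it below -/
import Mathlib

section
/- Let M be a 5×5 real matrix with minor-sums J_1, …, J_5, and suppose J_4 > 0 and either (i) J_1 > 0, J_5 > 0 and J_2·J_3 < 0, or (ii) J_1 < 0, J_5 < 0 and J_2·J_3 > 0. Then D2(M) < 0. -/
/-- The `k`-th minor-sum of a `5 × 5` real matrix `M`: the sum of its `k × k`
principal minors, i.e. `(-1)^k` times the coefficient of `X^(5-k)` in the
characteristic polynomial. -/
noncomputable def J5 (M : Matrix (Fin 5) (Fin 5) ℝ) (k : ℕ) : ℝ :=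
  (-1) ^ k * (Matrix.charpoly M).coeff (5 - k)

/-- The determinant of the second additive compound of a `5 × 5` real matrix. -/
noncomputable def D2 (M : Matrix (Fin 5) (Fin 5) ℝ) : ℝ :=
  -(J5 M 5) ^ 2 + 2 * J5 M 1 * J5 M 4 * J5 M 5 + J5 M 2 * J5 M 3 * J5 M 5
    - J5 M 1 * (J5 M 2) ^ 2 * J5 M 5 - (J5 M 1) ^ 2 * (J5 M 4) ^ 2
    - (J5 M 3) ^ 2 * J5 M 4 + J5 M 1 * J5 M 2 * J5 M 3 * J5 M 4

/-!
Completing the square in `J₅` gives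
`D2 = -(J₅ - J₁J₄)² + (J₃ - J₁J₂)(J₂J₅ - J₃J₄)`.
Both sign patterns say that `J₁` and `J₅` have the sign opposite to that of `J₂J₃ ≠ 0`.
Multiplying the cross term by `(J₂J₃)² = J₃ · J₂ · J₂J₃` splits it into the factors
`(J₃ - J₁J₂)J₃ = J₃² - J₁ · J₂J₃ > 0` and
`(J₂J₅ - J₃J₄)J₂ · J₂J₃ = J₂² · J₅J₂J₃ - (J₂J₃)²J₄ < 0`, so the cross term is negative.
-/

theorem D2_eq_neg_sq_add (M : Matrix (Fin 5) (Fin 5) ℝ) :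
    D2 M = -(J5 M 5 - J5 M 1 * J5 M 4) ^ 2
      + (J5 M 3 - J5 M 1 * J5 M 2) * (J5 M 2 * J5 M 5 - J5 M 3 * J5 M 4) := by
  unfold D2
  ring

theorem sub_mul_sub_neg_of_mul_neg {R : Type*} [CommRing R] [LinearOrder R]
    [IsStrictOrderedRing R] {a b c d e : R} (hd : 0 < d) (ha : a * (b * c) < 0)
    (he : e * (b * c) < 0) :
    (c - a * b) * (b * e - c * d) < 0 := by
  have hbc : b * c ≠ 0 := by
    rintro hbc
    simp [hbc] at ha
  have hleft : 0 < (c - a * b) * c := by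
    have : (c - a * b) * c = c ^ 2 - a * (b * c) := by ring
    rw [this]
    linarith [sq_nonneg c]
  have hright : (b * e - c * d) * (b * (b * c)) < 0 := by
    have : (b * e - c * d) * (b * (b * c)) = b ^ 2 * (e * (b * c)) - (b * c) ^ 2 * d := by ring
    rw [this]
    linarith [mul_nonpos_of_nonneg_of_nonpos (sq_nonneg b) he.le,
      mul_pos (sq_pos_of_ne_zero hbc) hd]
  have hsq : (c - a * b) * (b * e - c * d) * (b * c) ^ 2 < 0 := by
    calc (c - a * b) * (b * e - c * d) * (b * c) ^ 2
        = ((c - a * b) * c) * ((b * e - c * d) * (b * (b * c))) := by ring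
      _ < 0 := mul_neg_of_pos_of_neg hleft hright
  exact neg_of_mul_neg_left hsq (sq_nonneg _)

theorem fivePattern_D2_neg
    (M : Matrix (Fin 5) (Fin 5) ℝ)
    (h4 : 0 < J5 M 4)
    (h : (0 < J5 M 1 ∧ 0 < J5 M 5 ∧ J5 M 2 * J5 M 3 < 0) ∨
         (J5 M 1 < 0 ∧ J5 M 5 < 0 ∧ 0 < J5 M 2 * J5 M 3)) :
    D2 M < 0 := by
  obtain ⟨h1, h5⟩ : J5 M 1 * (J5 M 2 * J5 M 3) < 0 ∧ J5 M 5 * (J5 M 2 * J5 M 3) < 0 := by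
    rcases h with ⟨h1, h5, h23⟩ | ⟨h1, h5, h23⟩
    · exact ⟨mul_neg_of_pos_of_neg h1 h23, mul_neg_of_pos_of_neg h5 h23⟩
    · exact ⟨mul_neg_of_neg_of_pos h1 h23, mul_neg_of_neg_of_pos h5 h23⟩
  rw [D2_eq_neg_sq_add]
  linarith [sq_nonneg (J5 M 5 - J5 M 1 * J5 M 4), sub_mul_sub_neg_of_mul_neg h4 h1 h5]
end

section
/- Let M be a 5×5 real matrix with minor-sums J_1, …, J_5, and suppose J_1·J_2·J_3 > 0, J_4 > 0 and J_1·(J_5 − J_2·J_3) > 0. Then D2(M) ≤ 0. -/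
/-!
Multiplying by `J₁²` and writing `p = J₁J₂`, `t = J₃ - J₁J₂`, `r = J₁²J₄`, `v = J₁J₅ - J₁²J₄`
turns `D2` into `-(v² - ptv + rt²)`, while the hypotheses become `p(p + t) > 0`, `r > 0` and
`v + r > p(p + t)`. The quadratic `v² - ptv + rt²` is nonnegative there: either its discriminant
`t²(p² - 4r)` is nonpositive, or `r < p²` and the lower bound on `v` keeps `v` away from the
interval between its roots.
-/

theorem quadratic_nonneg_of_mul_lt_add {p t r v : ℝ} (hp : 0 < p * (p + t)) (hr : 0 < r)
    (hv : p * (p + t) < v + r) : 0 ≤ v ^ 2 - p * t * v + r * t ^ 2 := by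
  rcases le_or_gt (p ^ 2) (4 * r) with hdisc | hdisc
  · nlinarith [sq_nonneg (2 * v - p * t), mul_nonneg (sub_nonneg.2 hdisc) (sq_nonneg t)]
  have hpt : p * t < v := by linarith
  rcases le_or_gt 0 v with hv0 | hv0
  · nlinarith [mul_nonneg hv0 (sq_nonneg t)]
  have hp2 : 0 < p ^ 2 := by
    have : p ≠ 0 := by rintro rfl; simp at hp
    positivity
  have hvp : p * r * t < p ^ 2 * v := by
    nlinarith [mul_pos hp (by linarith : 0 < p ^ 2 - r), mul_pos hp2 (sub_pos.2 hv)]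
  have hq : p ^ 2 * (v ^ 2 - p * t * v + r * t ^ 2)
      = (p ^ 2 * v - p * r * t) * (v - p * t) + r * (p * t * v) := by ring
  have : 0 < p ^ 2 * (v ^ 2 - p * t * v + r * t ^ 2) := by
    rw [hq]
    exact add_pos (mul_pos (sub_pos.2 hvp) (sub_pos.2 hpt))
      (mul_pos hr (mul_pos_of_neg_of_neg (by linarith) hv0))
  exact (pos_of_mul_pos_right this hp2.le).le

theorem fivePattern_D2_nonpos_1
    (M : Matrix (Fin 5) (Fin 5) ℝ)
    (h123 : 0 < J5 M 1 * J5 M 2 * J5 M 3)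
    (h4 : 0 < J5 M 4)
    (h5 : 0 < J5 M 1 * (J5 M 5 - J5 M 2 * J5 M 3)) :
    D2 M ≤ 0 := by
  set a := J5 M 1
  set b := J5 M 2
  set c := J5 M 3
  set d := J5 M 4
  set e := J5 M 5
  have ha : a ≠ 0 := by rintro h; simp only [h, zero_mul, lt_irrefl] at h5
  have hq := quadratic_nonneg_of_mul_lt_add (p := a * b) (t := c - a * b) (r := a ^ 2 * d)
    (v := a * e - a ^ 2 * d) (by linarith) (by positivity) (by linarith)
  have hD2 : a ^ 2 * D2 M = -((a * e - a ^ 2 * d) ^ 2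
      - a * b * (c - a * b) * (a * e - a ^ 2 * d) + a ^ 2 * d * (c - a * b) ^ 2) := by
    unfold D2; ring
  exact nonpos_of_mul_nonpos_right (a := a ^ 2) (by linarith) (by positivity)
end

section
/- Let M be a 5×5 real matrix with minor-sums J_1, …, J_5, and suppose J_1·J_2·J_3 > 0, J_1·J_5 > 0 and J_1·(J_1·J_4 − J_2·J_3) > 0. Then D2(M) ≤ 0. -/
/-!
Read `D2` as a polynomial in `e = J₅` with the other minor-sums `a, b, c, d` as coefficients.
It is a downward parabola `-e² + S e - d (a (a d - b c) + c²)` with `S = 2 a d + b c - a b²`,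
whose discriminant is `(c - a b)² (b² - 4 d)`. If `b² ≤ 4 d` the parabola never rises above `0`.
Otherwise `a b² ≥ 4 a d` pushes `a S` below `0`, so `S e ≤ 0` because `a e > 0`; and `d > 0`
makes the constant term negative.
-/

noncomputable def d2Poly (a b c d e : ℝ) : ℝ :=
  -e ^ 2 + 2 * a * d * e + b * c * e - a * b ^ 2 * e - a ^ 2 * d ^ 2
    - c ^ 2 * d + a * b * c * d

section d2Poly

variable (a b c d e : ℝ)

theorem four_mul_d2Poly :
    4 * d2Poly a b c d e
      = (c - a * b) ^ 2 * (b ^ 2 - 4 * d) - (2 * e - (2 * a * d + b * c - a * b ^ 2)) ^ 2 := by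
  unfold d2Poly; ring

theorem d2Poly_eq_quadratic :
    d2Poly a b c d e
      = -e ^ 2 + (2 * a * d + b * c - a * b ^ 2) * e - d * (a * (a * d - b * c) + c ^ 2) := by
  unfold d2Poly; ring

variable {a b c d e}

theorem d2Poly_nonpos_of_sq_le (hbd : b ^ 2 ≤ 4 * d) : d2Poly a b c d e ≤ 0 := by
  have h := four_mul_d2Poly a b c d e
  linarith [mul_nonneg (sq_nonneg (c - a * b)) (sub_nonneg.mpr hbd),
    sq_nonneg (2 * e - (2 * a * d + b * c - a * b ^ 2))]

theorem d2Poly_nonpos_of_le_sq (h1 : 0 < a * b * c) (h2 : 0 < a * e)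
    (h3 : 0 < a * (a * d - b * c)) (hbd : 4 * d ≤ b ^ 2) : d2Poly a b c d e ≤ 0 := by
  have ha : 0 < a ^ 2 := by
    have : a ≠ 0 := by rintro rfl; simp at h1
    positivity
  have hd : 0 < d := by
    refine pos_of_mul_pos_right (?_ : 0 < a ^ 2 * d) ha.le
    linarith [show a ^ 2 * d = a * (a * d - b * c) + a * b * c by ring]
  have haS : a * (2 * a * d + b * c - a * b ^ 2) < 0 := by
    nlinarith [mul_le_mul_of_nonneg_left hbd ha.le]
  have hSe : (2 * a * d + b * c - a * b ^ 2) * e ≤ 0 := by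
    refine nonpos_of_mul_nonpos_left (?_ : _ * a ^ 2 ≤ 0) ha
    linarith [mul_neg_of_neg_of_pos haS h2,
      show (2 * a * d + b * c - a * b ^ 2) * e * a ^ 2
        = a * (2 * a * d + b * c - a * b ^ 2) * (a * e) by ring]
  rw [d2Poly_eq_quadratic]
  nlinarith [sq_nonneg e, mul_pos hd (add_pos_of_pos_of_nonneg h3 (sq_nonneg c))]

theorem d2Poly_nonpos (h1 : 0 < a * b * c) (h2 : 0 < a * e)
    (h3 : 0 < a * (a * d - b * c)) : d2Poly a b c d e ≤ 0 :=
  (le_total (b ^ 2) (4 * d)).elim d2Poly_nonpos_of_sq_le (d2Poly_nonpos_of_le_sq h1 h2 h3)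

end d2Poly

theorem fivePattern_D2_nonpos_2
    (M : Matrix (Fin 5) (Fin 5) ℝ)
    (h123 : 0 < J5 M 1 * J5 M 2 * J5 M 3)
    (h15 : 0 < J5 M 1 * J5 M 5)
    (hstar : 0 < J5 M 1 * (J5 M 1 * J5 M 4 - J5 M 2 * J5 M 3)) :
    D2 M ≤ 0 :=
  d2Poly_nonpos h123 h15 hstar
end
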